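/- For x₀ ∈ ℝ^p, X ∈ ℝ^{n×p}, λ > 0, and γ₀ ∈ ℝ^n with Σᵢ (γ₀)ᵢ = 1, if 1_nᵀX = 0 then the vector γ* = γ₀ + X(XᵀX + λI_p)⁻¹(x₀ − Xᵀγ₀) is the unique solution of the constrained problem min_{γ ∈ ℝⁿ, Σᵢγᵢ = 1} ‖x₀ − Xᵀγ‖₂² + λ‖γ − γ₀‖₂². -/

import Mathlib

open Matrix
open scoped BigOperators

private lemma sum_add_sq_expand {m : ℕ} (u v : Fin m → ℝ) :
    ∑ i, (u i + v i) ^ 2 = ∑ i, u i ^ 2 + 2 * ∑ i, u i * v i + ∑ i, v i ^ 2 := by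
  rw [Finset.mul_sum, ← Finset.sum_add_distrib, ← Finset.sum_add_distrib]
  apply Finset.sum_congr rfl
  intro i _
  ring

/-- Closed form of the ridge-augmented synthetic control weights: with column-centered
control features (`1ₙᵀX = 0`), the vector
`γ* = γ₀ + X(XᵀX + λI)⁻¹(x₀ − Xᵀγ₀)` sums to one and is the unique solution of
`min_{Σγᵢ=1} ‖x₀ − Xᵀγ‖² + λ‖γ − γ₀‖²`. -/
theorem ridge_augmented_weights_closed_form
    (n p : ℕ) (x₀ : Fin p → ℝ) (X : Matrix (Fin n) (Fin p) ℝ)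
    (l : ℝ) (hl : 0 < l) (γ₀ : Fin n → ℝ) (hγ₀ : ∑ i, γ₀ i = 1)
    (hcent : Xᵀ *ᵥ (fun _ => (1 : ℝ)) = 0) :
    let γs : Fin n → ℝ :=
      γ₀ + X *ᵥ ((Xᵀ * X + l • (1 : Matrix (Fin p) (Fin p) ℝ))⁻¹ *ᵥ (x₀ - Xᵀ *ᵥ γ₀))
    (∑ i, γs i = 1) ∧
      ∀ γ : Fin n → ℝ, ∑ i, γ i = 1 → γ ≠ γs →
        (∑ j, (x₀ j - (Xᵀ *ᵥ γs) j) ^ 2) + l * ∑ i, (γs i - γ₀ i) ^ 2 <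
          (∑ j, (x₀ j - (Xᵀ *ᵥ γ) j) ^ 2) + l * ∑ i, (γ i - γ₀ i) ^ 2 := by
  intro γs
  set A := Xᵀ * X + l • (1 : Matrix (Fin p) (Fin p) ℝ) with hAdef
  set δ : Fin p → ℝ := A⁻¹ *ᵥ (x₀ - Xᵀ *ᵥ γ₀) with hδdef
  have hApd : A.PosDef := by
    have h1 : (Xᵀ * X).PosSemidef := by
      have := posSemidef_conjTranspose_mul_self X
      simpa using this
    have h2 : (l • (1 : Matrix (Fin p) (Fin p) ℝ)).PosDef := by
      rw [smul_one_eq_diagonal]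
      exact .diagonal fun _ => hl
    exact Matrix.PosDef.posSemidef_add h1 h2
  have hAδ : A *ᵥ δ = x₀ - Xᵀ *ᵥ γ₀ := by
    rw [hδdef, mulVec_mulVec, Matrix.mul_nonsing_inv _
      ((Matrix.isUnit_iff_isUnit_det _).mp hApd.isUnit), one_mulVec]
  have hγs : γs = γ₀ + X *ᵥ δ := rfl
  -- the residual at γs is l • δ
  have hkey : ∀ j, x₀ j - (Xᵀ *ᵥ γs) j = l * δ j := by
    intro j
    have h1 : Xᵀ *ᵥ γs = Xᵀ *ᵥ γ₀ + (Xᵀ * X) *ᵥ δ := by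
      rw [hγs, mulVec_add, ← mulVec_mulVec]
    have h2 : (Xᵀ * X) *ᵥ δ + l • δ = x₀ - Xᵀ *ᵥ γ₀ := by
      rw [← hAδ, hAdef, add_mulVec, smul_mulVec, one_mulVec]
    have h3 := congrFun h2 j
    have h4 := congrFun h1 j
    simp only [Pi.add_apply, Pi.sub_apply, Pi.smul_apply, smul_eq_mul] at h3 h4
    linarith
  have hγsγ₀ : ∀ i, γs i - γ₀ i = (X *ᵥ δ) i := by
    intro i; rw [hγs]; simp
  -- sum of the correction is zero
  have hsum0 : ∑ i, (X *ᵥ δ) i = 0 := by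
    have h := congrArg (fun v => v ⬝ᵥ δ) hcent
    simp only [mulVec_transpose, zero_dotProduct] at h
    calc ∑ i, (X *ᵥ δ) i = (fun _ => (1:ℝ)) ⬝ᵥ (X *ᵥ δ) := by
          simp [dotProduct]
      _ = ((fun _ => (1:ℝ)) ᵥ* X) ⬝ᵥ δ := by rw [dotProduct_mulVec]
      _ = 0 := h
  constructor
  · rw [hγs]
    simp only [Pi.add_apply, Finset.sum_add_distrib, hγ₀, hsum0, add_zero]
  · intro γ hγ hne
    set d : Fin n → ℝ := γ - γs with hddef
    have hd : d ≠ 0 := sub_ne_zero.mpr hne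
    have hγeq : ∀ i, γ i = γs i + d i := by intro i; simp [hddef]
    set b : Fin p → ℝ := Xᵀ *ᵥ d with hbdef
    have hXγ : ∀ j, (Xᵀ *ᵥ γ) j = (Xᵀ *ᵥ γs) j + b j := by
      intro j
      have hγd : γ = γs + d := by funext i; simp [hγeq i]
      rw [hγd, mulVec_add]; simp; rfl
    -- cross term identity
    have hcross : ∑ j, δ j * b j = ∑ i, (X *ᵥ δ) i * d i := by
      have : δ ⬝ᵥ (Xᵀ *ᵥ d) = (X *ᵥ δ) ⬝ᵥ d := by
        rw [dotProduct_mulVec, vecMul_transpose]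
      simpa [dotProduct, hbdef] using this
    -- expand both squared sums
    have e1 : ∑ j, (x₀ j - (Xᵀ *ᵥ γ) j) ^ 2
        = ∑ j, (x₀ j - (Xᵀ *ᵥ γs) j) ^ 2 + 2 * ∑ j, (l * δ j) * (-(b j))
          + ∑ j, (-(b j)) ^ 2 := by
      have := sum_add_sq_expand (fun j => l * δ j) (fun j => -(b j))
      calc ∑ j, (x₀ j - (Xᵀ *ᵥ γ) j) ^ 2
          = ∑ j, (l * δ j + -(b j)) ^ 2 := by
            apply Finset.sum_congr rfl; intro j _
            rw [hXγ j, ← hkey j]; ring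
        _ = ∑ j, (l * δ j) ^ 2 + 2 * ∑ j, (l * δ j) * (-(b j)) + ∑ j, (-(b j)) ^ 2 := this
        _ = ∑ j, (x₀ j - (Xᵀ *ᵥ γs) j) ^ 2 + 2 * ∑ j, (l * δ j) * (-(b j))
            + ∑ j, (-(b j)) ^ 2 := by
            congr 1; congr 1
            apply Finset.sum_congr rfl; intro j _; rw [hkey j]
    have e2 : ∑ i, (γ i - γ₀ i) ^ 2
        = ∑ i, (γs i - γ₀ i) ^ 2 + 2 * ∑ i, (γs i - γ₀ i) * d i + ∑ i, d i ^ 2 := by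
      have := sum_add_sq_expand (fun i => γs i - γ₀ i) d
      calc ∑ i, (γ i - γ₀ i) ^ 2 = ∑ i, ((γs i - γ₀ i) + d i) ^ 2 := by
            apply Finset.sum_congr rfl; intro i _; rw [hγeq i]; ring
        _ = _ := this
    have hcross2 : ∑ i, (γs i - γ₀ i) * d i = ∑ i, (X *ᵥ δ) i * d i :=
      Finset.sum_congr rfl fun i _ => by rw [hγsγ₀ i]
    have hc1 : ∑ j, (l * δ j) * (-(b j)) = -(l * ∑ j, δ j * b j) := by
      calc ∑ j, (l * δ j) * (-(b j)) = ∑ j, -(l * (δ j * b j)) := by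
            apply Finset.sum_congr rfl; intro j _; ring
        _ = -(l * ∑ j, δ j * b j) := by rw [Finset.sum_neg_distrib, Finset.mul_sum]
    have hpos : 0 < ∑ i, d i ^ 2 := by
      obtain ⟨i, hi⟩ := Function.ne_iff.mp hd
      exact Finset.sum_pos' (fun i _ => sq_nonneg _)
        ⟨i, Finset.mem_univ i, sq_pos_iff.mpr (by simpa using hi)⟩
    have hbnn : 0 ≤ ∑ j, (-(b j)) ^ 2 := Finset.sum_nonneg fun j _ => sq_nonneg _
    rw [e1, e2, hc1, hcross, hcross2]
    nlinarith [mul_pos hl hpos]
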